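/- (Theorem 2, converse) Let σ̃ be a Markov policy such that, with the mean-field flow generated by σ̃ itself (z_{k+1} = φ(z_k, σ̃_k(z_k))), σ̃ is sequentially rational: for every Markov policy σ, every t ∈ {1,…,T}, z ∈ PMF X and x ∈ X, J_t^{σ̃}(z,x) ≥ J_t^{σ}(z,x). Then the family θ := σ̃ satisfies the fixed-point property: for every t, z, x and every π ∈ PMF A, ∑_a σ̃_t(z)(x)(a)·Q_t(z,x,a,σ̃_t(z)) ≥ ∑_a π(a)·Q_t(z,x,a,σ̃_t(z)), where Q and V are defined by the backward recursion from θ = σ̃. -/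

import Mathlib

/-!
One-shot deviation. Peeling off the first stage of the path sum defining `J`, the return of any
policy that agrees with `σ̃` after time `t` is `∑ₐ σ_t(z)(x)(a) · Q_t(z,x,a,σ̃_t(z))`, because the
continuation of such a policy from time `t + 1` is the return of `σ̃` itself, which by induction on
the remaining horizon is `V_{t+1}`. Applying sequential rationality to the policy that deviates
from `σ̃` only at `(t, z, x)`, by playing `π` there, gives the fixed-point inequality.
-/

open scoped BigOperators ENNReal

section MFG

variable {X A : Type*} [Fintype X] [Fintype A] [Nonempty X] [Nonempty A]

/-- McKean–Vlasov update: `phi τ z γ (y) = ∑ x, ∑ a, z x * γ x a * τ x a z y`. -/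
noncomputable def phi (τ : X → A → PMF X → PMF X) (z : PMF X) (γ : X → PMF A) : PMF X :=
  z.bind fun x => (γ x).bind fun a => τ x a z

/-- Backward-recursive value function with `V (T+1) = 0`. -/
noncomputable def V (τ : X → A → PMF X → PMF X) (R : X → A → PMF X → ℝ) (δ : ℝ)
    (T : ℕ) (θ : ℕ → PMF X → X → PMF A) (t : ℕ) (z : PMF X) (x : X) : ℝ :=
  if h : T < t then 0
  else
    ∑ a : A, ((θ t z x) a).toReal *
      (R x a z + δ * ∑ x' : X, ((τ x a z) x').toReal *
        V τ R δ T θ (t + 1) (phi τ z (θ t z)) x')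
termination_by T + 1 - t
decreasing_by omega

/-- Action-value function `Q_t(z,x,a,γ)`. -/
noncomputable def Q (τ : X → A → PMF X → PMF X) (R : X → A → PMF X → ℝ) (δ : ℝ)
    (T : ℕ) (θ : ℕ → PMF X → X → PMF A) (t : ℕ) (z : PMF X) (x : X) (a : A)
    (γ : X → PMF A) : ℝ :=
  R x a z + δ * ∑ x' : X, ((τ x a z) x').toReal * V τ R δ T θ (t + 1) (phi τ z γ) x'

/-- The fixed-point property of the equilibrium generating family `θ`. -/
def IsFixedPoint (τ : X → A → PMF X → PMF X) (R : X → A → PMF X → ℝ) (δ : ℝ)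
    (T : ℕ) (θ : ℕ → PMF X → X → PMF A) : Prop :=
  ∀ t, 1 ≤ t → t ≤ T → ∀ (z : PMF X) (x : X) (π : PMF A),
    ∑ a : A, ((θ t z x) a).toReal * Q τ R δ T θ t z x a (θ t z) ≥
      ∑ a : A, (π a).toReal * Q τ R δ T θ t z x a (θ t z)

/-- Mean-field flow generated by the policy `θ`, started from `z` at time `t`:
`flow τ θ t z n = z_{t+n}`. -/
noncomputable def flow (τ : X → A → PMF X → PMF X) (θ : ℕ → PMF X → X → PMF A)
    (t : ℕ) (z : PMF X) : ℕ → PMF X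
  | 0 => z
  | n + 1 => phi τ (flow τ θ t z n) (θ (t + n) (flow τ θ t z n))

/-- Individual state trajectory: `traj x xs 0 = x`, `traj x xs (i+1) = xs i`. -/
def traj {n : ℕ} (x : X) (xs : Fin n → X) : Fin (n + 1) → X := Fin.cases x xs

/-- Path-sum expected discounted return `J_t^σ(z,x)` of the Markov policy `σ`,
against the mean-field flow generated by `θ` started from `z` at time `t`. -/
noncomputable def J (τ : X → A → PMF X → PMF X) (R : X → A → PMF X → ℝ) (δ : ℝ)
    (T : ℕ) (θ σ : ℕ → PMF X → X → PMF A) (t : ℕ) (z : PMF X) (x : X) : ℝ :=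
  ∑ as : Fin (T - t + 1) → A, ∑ xs : Fin (T - t) → X,
    ((∏ k : Fin (T - t + 1),
        ((σ (t + (k : ℕ)) (flow τ θ t z (k : ℕ)) (traj x xs k)) (as k)).toReal) *
      (∏ k : Fin (T - t),
        ((τ (traj x xs k.castSucc) (as k.castSucc) (flow τ θ t z (k : ℕ)))
          (traj x xs k.succ)).toReal)) *
    (∑ k : Fin (T - t + 1),
      δ ^ (k : ℕ) * R (traj x xs k) (as k) (flow τ θ t z (k : ℕ)))

end MFG

theorem sum_pi_fin_succ {β M : Type*} [Fintype β] [AddCommMonoid M] {n : ℕ}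
    (f : (Fin (n + 1) → β) → M) :
    ∑ g : Fin (n + 1) → β, f g = ∑ b : β, ∑ g : Fin n → β, f (Fin.cons b g) := by
  rw [← (Fin.consEquiv fun _ => β).sum_comp f, Fintype.sum_prod_type]
  rfl

theorem PMF.sum_toReal_eq_one {α : Type*} [Fintype α] (p : PMF α) :
    ∑ a : α, (p a).toReal = 1 := by
  rw [← ENNReal.toReal_sum fun a _ => p.apply_ne_top a, ← tsum_fintype (L := .unconditional _),
    p.tsum_coe, ENNReal.toReal_one]

theorem traj_eq_cons {X : Type*} {n : ℕ} (x : X) (xs : Fin n → X) : traj x xs = Fin.cons x xs :=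
  rfl

section Paths

variable {X A : Type*} (τ : X → A → PMF X → PMF X) (R : X → A → PMF X → ℝ) (δ : ℝ)
  (θ σ : ℕ → PMF X → X → PMF A)

theorem flow_zero (t : ℕ) (z : PMF X) : flow τ θ t z 0 = z := rfl

theorem flow_phi_eq_flow_succ (t : ℕ) (z : PMF X) (n : ℕ) :
    flow τ θ (t + 1) (phi τ z (θ t z)) n = flow τ θ t z (n + 1) := by
  induction n with
  | zero => rfl
  | succ n ih =>
    simp only [flow, ih]
    rw [Nat.add_right_comm, Nat.add_assoc]

noncomputable def pathProb (n t : ℕ) (z : PMF X) (x : X)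
    (as : Fin (n + 1) → A) (xs : Fin n → X) : ℝ :=
  (∏ k : Fin (n + 1),
      ((σ (t + (k : ℕ)) (flow τ θ t z (k : ℕ)) (traj x xs k)) (as k)).toReal) *
    (∏ k : Fin n,
      ((τ (traj x xs k.castSucc) (as k.castSucc) (flow τ θ t z (k : ℕ)))
        (traj x xs k.succ)).toReal)

noncomputable def pathReward (n t : ℕ) (z : PMF X) (x : X)
    (as : Fin (n + 1) → A) (xs : Fin n → X) : ℝ :=
  ∑ k : Fin (n + 1), δ ^ (k : ℕ) * R (traj x xs k) (as k) (flow τ θ t z (k : ℕ))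

theorem pathProb_zero (t : ℕ) (z : PMF X) (x : X) (as : Fin 1 → A) (xs : Fin 0 → X) :
    pathProb τ θ σ 0 t z x as xs = (σ t z x (as 0)).toReal := by
  simp [pathProb, traj_eq_cons, flow_zero]

theorem pathReward_zero (t : ℕ) (z : PMF X) (x : X) (as : Fin 1 → A) (xs : Fin 0 → X) :
    pathReward τ R δ θ 0 t z x as xs = R x (as 0) z := by
  simp [pathReward, traj_eq_cons, flow_zero]

theorem pathProb_cons (n t : ℕ) (z : PMF X) (x : X) (a : A) (x₁ : X)
    (as : Fin (n + 1) → A) (xs : Fin n → X) :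
    pathProb τ θ σ (n + 1) t z x (Fin.cons a as) (Fin.cons x₁ xs) =
      (σ t z x a).toReal * (τ x a z x₁).toReal *
        pathProb τ θ σ n (t + 1) (phi τ z (θ t z)) x₁ as xs := by
  simp only [pathProb, Fin.prod_univ_succ, traj_eq_cons, Fin.cons_zero, Fin.cons_succ,
    Fin.val_zero, Fin.val_succ, ← Fin.succ_castSucc, Fin.castSucc_zero, flow_phi_eq_flow_succ,
    flow_zero]
  ring_nf

theorem pathReward_cons (n t : ℕ) (z : PMF X) (x : X) (a : A) (x₁ : X)
    (as : Fin (n + 1) → A) (xs : Fin n → X) :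
    pathReward τ R δ θ (n + 1) t z x (Fin.cons a as) (Fin.cons x₁ xs) =
      R x a z + δ * pathReward τ R δ θ n (t + 1) (phi τ z (θ t z)) x₁ as xs := by
  rw [pathReward, Fin.sum_univ_succ, pathReward, Finset.mul_sum]
  simp only [traj_eq_cons, Fin.cons_zero, Fin.cons_succ, Fin.val_zero, Fin.val_succ,
    flow_phi_eq_flow_succ, pow_zero, one_mul, flow_zero, pow_succ', mul_assoc]

end Paths

section Return

variable {X A : Type*} [Fintype X] [Fintype A]
  (τ : X → A → PMF X → PMF X) (R : X → A → PMF X → ℝ) (δ : ℝ)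
  (θ σ : ℕ → PMF X → X → PMF A)

theorem sum_pathProb_zero_mul (t : ℕ) (z : PMF X) (x : X)
    (F : (Fin 1 → A) → (Fin 0 → X) → ℝ) :
    ∑ as, ∑ xs, pathProb τ θ σ 0 t z x as xs * F as xs =
      ∑ a, (σ t z x a).toReal * F ![a] ![] := by
  rw [sum_pi_fin_succ]
  refine Finset.sum_congr rfl fun a _ => ?_
  rw [Fintype.sum_unique, Fintype.sum_unique, pathProb_zero, Fin.cons_zero]
  congr 2

theorem sum_pathProb_succ_mul (n t : ℕ) (z : PMF X) (x : X)
    (F : (Fin (n + 2) → A) → (Fin (n + 1) → X) → ℝ) :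
    ∑ as, ∑ xs, pathProb τ θ σ (n + 1) t z x as xs * F as xs =
      ∑ a, (σ t z x a).toReal * ∑ x₁, (τ x a z x₁).toReal *
        ∑ as, ∑ xs, pathProb τ θ σ n (t + 1) (phi τ z (θ t z)) x₁ as xs *
          F (Fin.cons a as) (Fin.cons x₁ xs) := by
  rw [sum_pi_fin_succ]
  refine Finset.sum_congr rfl fun a _ => ?_
  simp_rw [sum_pi_fin_succ (β := X), pathProb_cons, Finset.mul_sum]
  rw [Finset.sum_comm]
  simp only [mul_assoc]

theorem sum_pathProb (n t : ℕ) (z : PMF X) (x : X) :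
    ∑ as, ∑ xs, pathProb τ θ σ n t z x as xs = 1 := by
  induction n generalizing t z x with
  | zero => simpa [PMF.sum_toReal_eq_one] using sum_pathProb_zero_mul τ θ σ t z x fun _ _ => 1
  | succ n ih =>
    simpa [ih, PMF.sum_toReal_eq_one] using sum_pathProb_succ_mul τ θ σ n t z x fun _ _ => 1

noncomputable def expectedReturn (n t : ℕ) (z : PMF X) (x : X) : ℝ :=
  ∑ as : Fin (n + 1) → A, ∑ xs : Fin n → X,
    pathProb τ θ σ n t z x as xs * pathReward τ R δ θ n t z x as xs

theorem J_eq_expectedReturn (T t : ℕ) (z : PMF X) (x : X) :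
    J τ R δ T θ σ t z x = expectedReturn τ R δ θ σ (T - t) t z x := rfl

theorem expectedReturn_zero (t : ℕ) (z : PMF X) (x : X) :
    expectedReturn τ R δ θ σ 0 t z x = ∑ a, (σ t z x a).toReal * R x a z := by
  simp only [expectedReturn, sum_pathProb_zero_mul, pathReward_zero]
  rfl

theorem expectedReturn_succ (n t : ℕ) (z : PMF X) (x : X) :
    expectedReturn τ R δ θ σ (n + 1) t z x =
      ∑ a, (σ t z x a).toReal * (R x a z + δ * ∑ x₁, (τ x a z x₁).toReal *
        expectedReturn τ R δ θ σ n (t + 1) (phi τ z (θ t z)) x₁) := by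
  simp only [expectedReturn, sum_pathProb_succ_mul, pathReward_cons, mul_add,
    Finset.sum_add_distrib, ← Finset.sum_mul, sum_pathProb, one_mul, PMF.sum_toReal_eq_one]
  simp only [Finset.mul_sum, mul_left_comm δ]

end Return

section ValueFunction

variable {X A : Type*} [Fintype X] [Fintype A]
  (τ : X → A → PMF X → PMF X) (R : X → A → PMF X → ℝ) (δ : ℝ) (T : ℕ)
  (θ : ℕ → PMF X → X → PMF A)

theorem V_eq_zero_of_lt {t : ℕ} (h : T < t) (z : PMF X) (x : X) : V τ R δ T θ t z x = 0 := by
  rw [V, dif_pos h]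

theorem V_eq_sum_Q {t : ℕ} (h : t ≤ T) (z : PMF X) (x : X) :
    V τ R δ T θ t z x = ∑ a, (θ t z x a).toReal * Q τ R δ T θ t z x a (θ t z) := by
  rw [V, dif_neg (not_lt.2 h)]
  rfl

theorem Q_eq_R_of_le {t : ℕ} (h : T ≤ t) (z : PMF X) (x : X) (a : A) (γ : X → PMF A) :
    Q τ R δ T θ t z x a γ = R x a z := by
  simp [Q, V_eq_zero_of_lt τ R δ T θ (Nat.lt_succ_of_le h)]

theorem expectedReturn_eq_sum_Q {σ : ℕ → PMF X → X → PMF A} {n t : ℕ}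
    (hσ : ∀ k, t < k → σ k = θ k) (hn : t + n = T) (z : PMF X) (x : X) :
    expectedReturn τ R δ θ σ n t z x =
      ∑ a, (σ t z x a).toReal * Q τ R δ T θ t z x a (θ t z) := by
  induction n generalizing t z x with
  | zero => simp only [expectedReturn_zero, Q_eq_R_of_le τ R δ T θ (t := t) (by omega)]
  | succ n ih =>
    have hV : ∀ z' x₁, expectedReturn τ R δ θ σ n (t + 1) z' x₁ = V τ R δ T θ (t + 1) z' x₁ := by
      intro z' x₁
      rw [ih (fun k hk => hσ k (by omega)) (by omega), hσ (t + 1) (by omega),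
        V_eq_sum_Q τ R δ T θ (by omega)]
    simp only [expectedReturn_succ, hV]
    rfl

theorem J_eq_sum_Q {σ : ℕ → PMF X → X → PMF A} {t : ℕ} (ht : t ≤ T)
    (hσ : ∀ k, t < k → σ k = θ k) (z : PMF X) (x : X) :
    J τ R δ T θ σ t z x = ∑ a, (σ t z x a).toReal * Q τ R δ T θ t z x a (θ t z) := by
  rw [J_eq_expectedReturn]
  exact expectedReturn_eq_sum_Q τ R δ T θ hσ (by omega) z x

end ValueFunction

section MFG

variable {X A : Type*} [Fintype X] [Fintype A] [Nonempty X] [Nonempty A]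

theorem sequentially_rational_implies_fixed_point_general
    (τ : X → A → PMF X → PMF X) (R : X → A → PMF X → ℝ) (δ : ℝ)
    (T : ℕ)
    (σt : ℕ → PMF X → X → PMF A)
    (hrat : ∀ (σ : ℕ → PMF X → X → PMF A) (t : ℕ), 1 ≤ t → t ≤ T →
      ∀ (z : PMF X) (x : X), J τ R δ T σt σt t z x ≥ J τ R δ T σt σ t z x) :
    IsFixedPoint τ R δ T σt := by
  classical
  intro t ht1 htT z x π
  let σ : ℕ → PMF X → X → PMF A := fun k w y => if k = t ∧ w = z ∧ y = x then π else σt k w y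
  have hσ_later : ∀ k, t < k → σ k = σt k := fun k hk => by
    funext w y
    simp [σ, hk.ne']
  have hσ_now : σ t z x = π := by simp [σ]
  have h := hrat σ t ht1 htT z x
  rwa [J_eq_sum_Q τ R δ T σt htT (fun _ _ => rfl), J_eq_sum_Q τ R δ T σt htT hσ_later,
    hσ_now] at h

/-- Theorem 2, converse: if the Markov policy `σ̃` is sequentially rational
against the mean-field flow generated by itself, then `θ := σ̃` satisfies the fixed-point
property of the backward recursion. -/
theorem sequentially_rational_implies_fixed_point
    (τ : X → A → PMF X → PMF X) (R : X → A → PMF X → ℝ) (δ : ℝ)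
    (hδ0 : 0 < δ) (hδ1 : δ ≤ 1) (T : ℕ) (hT : 1 ≤ T)
    (σt : ℕ → PMF X → X → PMF A)
    (hrat : ∀ (σ : ℕ → PMF X → X → PMF A) (t : ℕ), 1 ≤ t → t ≤ T →
      ∀ (z : PMF X) (x : X), J τ R δ T σt σt t z x ≥ J τ R δ T σt σ t z x) :
    IsFixedPoint τ R δ T σt :=
  sequentially_rational_implies_fixed_point_general τ R δ T σt hrat

end MFG
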